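/- arXiv:1505.04985 — 2 statements merged into one kernel-verified Lean document; each statement's English description precedes it below -/
import Mathlib

section
/- If |A| = 1 with A = {a}, then for each m ≥ 0 the inequation a^m x ≼ a^m x + x is sound modulo the weak impossible futures preorder, i.e., for every closed substitution ρ, ρ(a^m x) ≲_WIF ρ(a^m x + x). -/
/-- BCCS terms over concrete actions `A` (with `none` playing the role of the
hidden action τ) and variables `V`. -/
inductive Tm (A V : Type) : Type
  | nil : Tm A V
  | var : V → Tm A V
  | plus : Tm A V → Tm A V → Tm A V
  | pre : Option A → Tm A V → Tm A V

namespace Tm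

variable {A V : Type}

/-- The operational semantics of BCCS. -/
inductive Step : Tm A V → Option A → Tm A V → Prop
  | pre (α : Option A) (t : Tm A V) : Step (.pre α t) α t
  | plusL {t : Tm A V} {α : Option A} {t' : Tm A V} (u : Tm A V) :
      Step t α t' → Step (.plus t u) α t'
  | plusR (t : Tm A V) {u : Tm A V} {α : Option A} {u' : Tm A V} :
      Step u α u' → Step (.plus t u) α u'

/-- `⇒` : the reflexive-transitive closure of τ-steps. -/
def WTau : Tm A V → Tm A V → Prop := Relation.ReflTransGen (fun t u => Step t none u)

/-- Strong (concrete) traces leading to a state. -/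
inductive TraceTo : Tm A V → List A → Tm A V → Prop
  | refl (t : Tm A V) : TraceTo t [] t
  | act {t : Tm A V} {a : A} {t' : Tm A V} {w : List A} {u : Tm A V} :
      Step t (some a) t' → TraceTo t' w u → TraceTo t (a :: w) u

/-- Weak traces leading to a state (τ-steps are skipped). -/
inductive WTraceTo : Tm A V → List A → Tm A V → Prop
  | refl (t : Tm A V) : WTraceTo t [] t
  | tau {t t' : Tm A V} {w : List A} {u : Tm A V} :
      Step t none t' → WTraceTo t' w u → WTraceTo t w u
  | act {t : Tm A V} {a : A} {t' : Tm A V} {w : List A} {u : Tm A V} :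
      Step t (some a) t' → WTraceTo t' w u → WTraceTo t (a :: w) u

/-- The set of (strong) traces of a term. -/
def T (t : Tm A V) : Set (List A) := {w | ∃ t', TraceTo t w t'}

/-- The set of weak traces of a term. -/
def WT (t : Tm A V) : Set (List A) := {w | ∃ t', WTraceTo t w t'}

/-- `(w, B)` is an impossible future of `t`. -/
def ImpFut (t : Tm A V) (w : List A) (B : Set (List A)) : Prop :=
  ∃ t', TraceTo t w t' ∧ ∀ s ∈ T t', s ∉ B

/-- `(w, B)` is a weak impossible future of `t`. -/
def WImpFut (t : Tm A V) (w : List A) (B : Set (List A)) : Prop :=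
  ∃ t', WTraceTo t w t' ∧ ∀ s ∈ WT t', s ∉ B

/-- The (concrete) impossible futures preorder. -/
def IFle (p q : Tm A V) : Prop := ∀ w B, ImpFut p w B → ImpFut q w B

/-- (Concrete) impossible futures equivalence. -/
def IFeq (p q : Tm A V) : Prop := IFle p q ∧ IFle q p

/-- The weak impossible futures preorder. -/
def WIFle (p q : Tm A V) : Prop :=
  (∀ w B, WImpFut p w B → WImpFut q w B) ∧ (WT p = WT q) ∧
  ((∃ p', Step p none p') → ∃ q', Step q none q')

/-- Weak impossible futures equivalence. -/
def WIFeq (p q : Tm A V) : Prop := WIFle p q ∧ WIFle q p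

/-- The variables occurring in a term. -/
def vars : Tm A V → Set V
  | nil => ∅
  | var x => {x}
  | plus t u => vars t ∪ vars u
  | pre _ t => vars t

/-- A term is closed if it contains no variables. -/
def Closed (t : Tm A V) : Prop := vars t = ∅

/-- Substitution. -/
def subst (σ : V → Tm A V) : Tm A V → Tm A V
  | nil => nil
  | var x => σ x
  | plus t u => plus (subst σ t) (subst σ u)
  | pre α t => pre α (subst σ t)

/-- A closed substitution. -/
def ClosedSub (σ : V → Tm A V) : Prop := ∀ x, Closed (σ x)

/-- A BCCSP term: one containing no occurrence of the τ prefix. -/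
def NoTau : Tm A V → Prop
  | nil => True
  | var _ => True
  | plus t u => NoTau t ∧ NoTau u
  | pre none _ => False
  | pre (some _) t => NoTau t

/-- The variables occurring initially (outside all prefixes). -/
def initVars : Tm A V → Set V
  | nil => ∅
  | var x => {x}
  | plus t u => initVars t ∪ initVars u
  | pre _ _ => ∅

/-- The variables having a non-initial occurrence (under some prefix). -/
def deepVars : Tm A V → Set V
  | nil => ∅
  | var _ => ∅
  | plus t u => deepVars t ∪ deepVars u
  | pre _ t => vars t

/-- A term is safe if no variable occurs both initially and non-initially. -/
def Safe (t : Tm A V) : Prop := initVars t ∩ deepVars t = ∅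

/-- `init-τ` : rename all initial prefixes into τ. -/
def initTau : Tm A V → Tm A V
  | nil => nil
  | var x => var x
  | plus t u => plus (initTau t) (initTau u)
  | pre _ t => pre none t

/-- The weak depth of a term (τ-prefixes are not counted). -/
def wdepth : Tm A V → ℕ
  | nil => 0
  | var _ => 0
  | plus t u => max (wdepth t) (wdepth u)
  | pre none t => wdepth t
  | pre (some _) t => wdepth t + 1

/-- `n`-fold prefixing with the action `a`. -/
def npre (a : A) : ℕ → Tm A V → Tm A V
  | 0, t => t
  | n + 1, t => pre (some a) (npre a n t)

/-- Finite sums of terms. -/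
def listSum : List (Tm A V) → Tm A V
  | [] => nil
  | t :: l => plus t (listSum l)

/-- Weak traces ending in a variable: `(w, x) ∈ WTV t` iff `t` can weakly perform
`w` and reach a term in which `x` occurs initially. -/
def WTV (t : Tm A V) : Set (List A × V) :=
  {wx | ∃ t', WTraceTo t wx.1 t' ∧ wx.2 ∈ initVars t'}

/-- The axioms A1-4 + WIF1 + WIF2 (as schemas, i.e. closed under instantiation). -/
inductive AX : Tm A V → Tm A V → Prop
  | A1 (t u : Tm A V) : AX (.plus t u) (.plus u t)
  | A2 (t u v : Tm A V) : AX (.plus (.plus t u) v) (.plus t (.plus u v))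
  | A3 (t : Tm A V) : AX (.plus t t) t
  | A4 (t : Tm A V) : AX (.plus t .nil) t
  | WIF1 (α : Option A) (t u : Tm A V) :
      AX (.pre α (.plus (.pre none t) (.pre none u))) (.plus (.pre α t) (.pre α u))
  | WIF2 (t u : Tm A V) :
      AX (.plus (.pre none t) u) (.plus (.pre none t) (.pre none (.plus t u)))

/-- Equational derivability from an axiomatization `E`. -/
inductive Deriv (E : Tm A V → Tm A V → Prop) : Tm A V → Tm A V → Prop
  | ax {t u : Tm A V} : E t u → Deriv E t u
  | inst {t u : Tm A V} (σ : V → Tm A V) : E t u → Deriv E (subst σ t) (subst σ u)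
  | refl (t : Tm A V) : Deriv E t t
  | symm {t u : Tm A V} : Deriv E t u → Deriv E u t
  | trans {t u v : Tm A V} : Deriv E t u → Deriv E u v → Deriv E t v
  | pre (α : Option A) {t u : Tm A V} : Deriv E t u → Deriv E (.pre α t) (.pre α u)
  | plus {t u t' u' : Tm A V} :
      Deriv E t t' → Deriv E u u' → Deriv E (.plus t u) (.plus t' u')

/-- Inequational derivability from an axiomatization `E` (no symmetry). -/
inductive IDeriv (E : Tm A V → Tm A V → Prop) : Tm A V → Tm A V → Prop
  | ax {t u : Tm A V} : E t u → IDeriv E t u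
  | inst {t u : Tm A V} (σ : V → Tm A V) : E t u → IDeriv E (subst σ t) (subst σ u)
  | refl (t : Tm A V) : IDeriv E t t
  | trans {t u v : Tm A V} : IDeriv E t u → IDeriv E u v → IDeriv E t v
  | pre (α : Option A) {t u : Tm A V} : IDeriv E t u → IDeriv E (.pre α t) (.pre α u)
  | plus {t u t' u' : Tm A V} :
      IDeriv E t t' → IDeriv E u u' → IDeriv E (.plus t u) (.plus t' u')

lemma wtrace_prefix {t : Tm A V} {w : List A} {u : Tm A V}
    (h : WTraceTo t w u) : ∀ w1 w2, w = w1 ++ w2 → ∃ v, WTraceTo t w1 v := by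
  induction h with
  | refl t =>
    intro w1 w2 h
    have : w1 = [] := by
      cases w1 with
      | nil => rfl
      | cons b w1' => simp at h
    subst this
    exact ⟨t, .refl t⟩
  | tau s _ ih =>
    intro w1 w2 h
    obtain ⟨v, hv⟩ := ih w1 w2 h
    exact ⟨v, .tau s hv⟩
  | act s _ ih =>
    intro w1 w2 h
    cases w1 with
    | nil => exact ⟨_, .refl _⟩
    | cons b w1' =>
      rw [List.cons_append, List.cons.injEq] at h
      obtain ⟨v, hv⟩ := ih w1' w2 h.2
      exact ⟨v, .act (h.1 ▸ s) hv⟩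

lemma repl_self (a : A) (hA : ∀ b : A, b = a) (w : List A) :
    w = List.replicate w.length a := by
  induction w with
  | nil => rfl
  | cons b w ih =>
    rw [List.length_cons, List.replicate_succ, hA b]
    exact congrArg _ ih

lemma wt_pre (a : A) (hA : ∀ b : A, b = a) {t : Tm A V} {w : List A}
    (h : w ∈ WT t) : w ∈ WT (pre (some a) t) := by
  cases w with
  | nil => exact ⟨_, .refl _⟩
  | cons b w' =>
    obtain ⟨u, hu⟩ := h
    have hb := hA b
    have hw' := repl_self a hA w'
    have heq : b :: w' = w' ++ [b] := by
      rw [hb]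
      conv_lhs => rw [hw']
      conv_rhs => rw [hw']
      rw [← List.replicate_succ, List.replicate_succ']
    obtain ⟨v, hv⟩ := wtrace_prefix hu w' [b] heq
    rw [hb]
    exact ⟨v, .act (Step.pre (some a) t) hv⟩

lemma wt_npre (a : A) (hA : ∀ b : A, b = a) {t : Tm A V} {w : List A}
    (h : w ∈ WT t) : ∀ m, w ∈ WT (npre a m t) := by
  intro m
  induction m with
  | zero => exact h
  | succ n ih => exact wt_pre a hA ih

lemma wt_plus {p q : Tm A V} {w : List A} :
    w ∈ WT (plus p q) ↔ w ∈ WT p ∨ w ∈ WT q := by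
  constructor
  · rintro ⟨u, hu⟩
    cases hu with
    | refl => exact Or.inl ⟨p, .refl p⟩
    | tau s rest =>
      cases s with
      | plusL _ s' => exact Or.inl ⟨u, .tau s' rest⟩
      | plusR _ s' => exact Or.inr ⟨u, .tau s' rest⟩
    | act s rest =>
      cases s with
      | plusL _ s' => exact Or.inl ⟨u, .act s' rest⟩
      | plusR _ s' => exact Or.inr ⟨u, .act s' rest⟩
  · rintro (⟨u, hu⟩ | ⟨u, hu⟩)
    · cases hu with
      | refl => exact ⟨_, .refl _⟩
      | tau s rest => exact ⟨u, .tau (Step.plusL q s) rest⟩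
      | act s rest => exact ⟨u, .act (Step.plusL q s) rest⟩
    · cases hu with
      | refl => exact ⟨_, .refl _⟩
      | tau s rest => exact ⟨u, .tau (Step.plusR p s) rest⟩
      | act s rest => exact ⟨u, .act (Step.plusR p s) rest⟩

lemma subst_npre (σ : V → Tm A V) (a : A) (t : Tm A V) :
    ∀ m, subst σ (npre a m t) = npre a m (subst σ t) := by
  intro m
  induction m with
  | zero => rfl
  | succ n ih => simp [npre, subst, ih]

end Tm

/-- if `A = {a}`, then for each `m ≥ 0` the inequation
`a^m x ≼ a^m x + x` is sound modulo the weak impossible futures preorder. -/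
theorem stmt17 {A V : Type} (a : A) (hA : ∀ b : A, b = a) (x : V) (m : ℕ) :
    ∀ ρ : V → Tm A V, Tm.ClosedSub ρ →
      Tm.WIFle (Tm.subst ρ (Tm.npre a m (.var x)))
               (Tm.subst ρ (.plus (Tm.npre a m (.var x)) (.var x))) := by
  intro ρ _
  set p : Tm A V := Tm.npre a m (ρ x) with hp
  have h1 : Tm.subst ρ (Tm.npre a m (.var x)) = p := by
    rw [Tm.subst_npre]; rfl
  have h2 : Tm.subst ρ (.plus (Tm.npre a m (.var x)) (.var x)) = .plus p (ρ x) := by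
    show Tm.plus (Tm.subst ρ (Tm.npre a m (.var x))) (Tm.subst ρ (.var x)) = _
    rw [h1]; rfl
  rw [h1, h2]
  have hsub : ∀ w, w ∈ Tm.WT (ρ x) → w ∈ Tm.WT p :=
    fun w hw => Tm.wt_npre a hA hw m
  have hWT : Tm.WT (Tm.plus p (ρ x)) = Tm.WT p := by
    ext w
    exact ⟨fun h => (Tm.wt_plus.mp h).elim id (hsub w), fun h => Tm.wt_plus.mpr (Or.inl h)⟩
  refine ⟨?_, hWT.symm, ?_⟩
  · rintro w B ⟨t', ht', hB⟩
    cases ht' with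
    | refl =>
      refine ⟨Tm.plus p (ρ x), .refl _, ?_⟩
      rw [hWT]; exact hB
    | tau s rest => exact ⟨t', .tau (Tm.Step.plusL _ s) rest, hB⟩
    | act s rest => exact ⟨t', .act (Tm.Step.plusL _ s) rest, hB⟩
  · rintro ⟨p', hp'⟩
    exact ⟨p', Tm.Step.plusL _ hp'⟩
end

section
/- Let A = {a}. If t ≲_WIF u (under all closed substitutions), then WT_V(t) ⊆ WT_V(u), where WT_V(t) is the set of weak traces of t ending in a variable. -/
namespace Tm

variable {A V : Type}

lemma nil_no_step {α : Option A} {r : Tm A V} : ¬ Step (nil : Tm A V) α r := by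
  intro h; cases h

lemma wtrace_nil {s : List A} {r : Tm A V} (h : WTraceTo (nil : Tm A V) s r) :
    s = [] ∧ r = nil := by
  cases h with
  | refl => exact ⟨rfl, rfl⟩
  | tau h _ => exact absurd h nil_no_step
  | act h _ => exact absurd h nil_no_step

lemma step_subst {ρ : V → Tm A V} {s s₀ : Tm A V} {α : Option A}
    (h : Step s α s₀) : Step (subst ρ s) α (subst ρ s₀) := by
  induction h with
  | pre α t => exact Step.pre α _
  | plusL u _ ih => exact Step.plusL _ ih
  | plusR t _ ih => exact Step.plusR _ ih

lemma wtrace_subst {ρ : V → Tm A V} {s s₀ : Tm A V} {w : List A}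
    (h : WTraceTo s w s₀) : WTraceTo (subst ρ s) w (subst ρ s₀) := by
  induction h with
  | refl => exact WTraceTo.refl _
  | tau h _ ih => exact WTraceTo.tau (step_subst h) ih
  | act h _ ih => exact WTraceTo.act (step_subst h) ih

lemma wtrace_append {p q r : Tm A V} {w v : List A}
    (h1 : WTraceTo p w q) (h2 : WTraceTo q v r) : WTraceTo p (w ++ v) r := by
  induction h1 with
  | refl => exact h2
  | tau h _ ih => exact WTraceTo.tau h (ih h2)
  | act h _ ih => exact WTraceTo.act h (ih h2)

lemma step_init {ρ : V → Tm A V} {s : Tm A V} {x : V} {α : Option A} {r : Tm A V}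
    (hx : x ∈ initVars s) (h : Step (ρ x) α r) : Step (subst ρ s) α r := by
  induction s with
  | nil => exact absurd hx (by simp [initVars])
  | var y =>
      have : x = y := by simpa [initVars] using hx
      subst this; exact h
  | plus t1 t2 ih1 ih2 =>
      rcases (by simpa [initVars] using hx : x ∈ initVars t1 ∨ x ∈ initVars t2) with h1 | h2
      · exact Step.plusL _ (ih1 h1)
      · exact Step.plusR _ (ih2 h2)
  | pre α t ih => exact absurd hx (by simp [initVars])

lemma step_subst_inv {ρ : V → Tm A V} {s : Tm A V} {α : Option A} {s' : Tm A V}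
    (h : Step (subst ρ s) α s') :
    (∃ s₀, Step s α s₀ ∧ s' = subst ρ s₀) ∨ (∃ x ∈ initVars s, Step (ρ x) α s') := by
  induction s with
  | nil => exact absurd h (by intro h; cases h)
  | var y => exact Or.inr ⟨y, by simp [initVars], h⟩
  | plus t1 t2 ih1 ih2 =>
      cases h with
      | plusL _ h =>
          rcases ih1 h with ⟨s₀, hs, rfl⟩ | ⟨x, hx, hs⟩
          · exact Or.inl ⟨s₀, Step.plusL _ hs, rfl⟩
          · exact Or.inr ⟨x, by simp [initVars, hx], hs⟩
      | plusR _ h =>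
          rcases ih2 h with ⟨s₀, hs, rfl⟩ | ⟨x, hx, hs⟩
          · exact Or.inl ⟨s₀, Step.plusR _ hs, rfl⟩
          · exact Or.inr ⟨x, by simp [initVars, hx], hs⟩
  | pre β t ih =>
      cases h with
      | pre => exact Or.inl ⟨t, Step.pre _ _, rfl⟩

lemma wtrace_subst_inv {ρ : V → Tm A V} {p : Tm A V} {v : List A} {r : Tm A V}
    (h : WTraceTo p v r) : ∀ s : Tm A V, p = subst ρ s →
    (∃ s₀, WTraceTo s v s₀ ∧ r = subst ρ s₀) ∨
    (∃ (w₁ w₂ : List A) (s₀ : Tm A V) (x : V), v = w₁ ++ w₂ ∧ WTraceTo s w₁ s₀ ∧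
      x ∈ initVars s₀ ∧ WTraceTo (ρ x) w₂ r) := by
  induction h with
  | refl t => exact fun s hs => Or.inl ⟨s, WTraceTo.refl s, hs⟩
  | tau hstep htr ih =>
      rintro s rfl
      rcases step_subst_inv hstep with ⟨s₀, hs, rfl⟩ | ⟨x, hx, hs⟩
      · rcases ih s₀ rfl with ⟨s₁, h1, h2⟩ | ⟨w₁, w₂, s₁, x, h1, h2, h3, h4⟩
        · exact Or.inl ⟨s₁, WTraceTo.tau hs h1, h2⟩
        · exact Or.inr ⟨w₁, w₂, s₁, x, h1, WTraceTo.tau hs h2, h3, h4⟩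
      · exact Or.inr ⟨[], _, s, x, rfl, WTraceTo.refl s, hx, WTraceTo.tau hs htr⟩
  | act hstep htr ih =>
      rintro s rfl
      rcases step_subst_inv hstep with ⟨s₀, hs, rfl⟩ | ⟨x, hx, hs⟩
      · rcases ih s₀ rfl with ⟨s₁, h1, h2⟩ | ⟨w₁, w₂, s₁, x, h1, h2, h3, h4⟩
        · exact Or.inl ⟨s₁, WTraceTo.act hs h1, h2⟩
        · exact Or.inr ⟨_ :: w₁, w₂, s₁, x, by simp [h1], WTraceTo.act hs h2, h3, h4⟩
      · exact Or.inr ⟨[], _, s, x, rfl, WTraceTo.refl s, hx, WTraceTo.act hs htr⟩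

lemma step_wdepth_none {p q : Tm A V} (h : Step p none q) : wdepth q ≤ wdepth p := by
  generalize hα : (none : Option A) = α at h
  induction h with
  | pre β t => cases hα; simp [wdepth]
  | plusL u _ ih => exact le_trans (ih hα) (by simp [wdepth])
  | plusR t _ ih => exact le_trans (ih hα) (by simp [wdepth])

lemma step_wdepth_some {p q : Tm A V} {b : A} (h : Step p (some b) q) :
    wdepth q + 1 ≤ wdepth p := by
  generalize hα : (some b : Option A) = α at h
  induction h with
  | pre β t => cases hα; simp [wdepth]
  | plusL u _ ih => exact le_trans (ih hα) (by simp [wdepth])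
  | plusR t _ ih => exact le_trans (ih hα) (by simp [wdepth])

lemma wtrace_wdepth {p q : Tm A V} {w : List A} (h : WTraceTo p w q) :
    w.length ≤ wdepth p := by
  induction h with
  | refl => exact Nat.zero_le _
  | tau hs _ ih => exact le_trans ih (step_wdepth_none hs)
  | act hs _ ih => simpa using le_trans (Nat.add_le_add_right ih 1) (step_wdepth_some hs)

lemma wdepth_subst_nil (s : Tm A V) :
    wdepth (subst (fun _ => (nil : Tm A V)) s) ≤ wdepth s := by
  induction s with
  | nil => simp [subst, wdepth]
  | var y => simp [subst, wdepth]
  | plus t1 t2 ih1 ih2 =>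
      simp only [subst, wdepth]; exact max_le_max ih1 ih2
  | pre β t ih => cases β <;> simp [subst, wdepth] <;> omega

lemma npre_closed (a : A) (n : ℕ) : Closed (npre a n (nil : Tm A V)) := by
  induction n with
  | zero => rfl
  | succ n ih => simpa [npre, Closed, vars] using ih

lemma npre_trace (a : A) (n : ℕ) :
    WTraceTo (npre a n (nil : Tm A V)) (List.replicate n a) nil := by
  induction n with
  | zero => exact WTraceTo.refl _
  | succ n ih => exact WTraceTo.act (Step.pre _ _) ih

lemma npre_inv {a : A} {p : Tm A V} {v : List A} {r : Tm A V}
    (h : WTraceTo p v r) : ∀ n, p = npre a n nil →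
    v.length ≤ n ∧ r = npre a (n - v.length) nil := by
  induction h with
  | refl t => intro n hn; simpa using hn
  | tau hs htr ih =>
      rintro n rfl
      cases n with
      | zero => exact absurd hs nil_no_step
      | succ n => cases hs
  | act hs htr ih =>
      rintro n rfl
      cases n with
      | zero => exact absurd hs nil_no_step
      | succ n =>
          cases hs
          rcases ih n rfl with ⟨h1, h2⟩
          exact ⟨by simpa using Nat.succ_le_succ h1, by simpa [Nat.succ_sub_succ] using h2⟩

end Tm

/-- if `A = {a}` and `t ≲_WIF u` under all closed substitutions,
then `WT_V(t) ⊆ WT_V(u)`. -/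
theorem stmt18 {A V : Type} [Countable V] (a : A) (hA : ∀ b : A, b = a)
    (t u : Tm A V)
    (h : ∀ ρ : V → Tm A V, Tm.ClosedSub ρ → Tm.WIFle (Tm.subst ρ t) (Tm.subst ρ u)) :
    Tm.WTV t ⊆ Tm.WTV u := by
  obtain ⟨f, hf⟩ := Countable.exists_injective_nat V
  intro wx hwx
  obtain ⟨w, x⟩ := wx
  obtain ⟨t₀, htr, hx⟩ := hwx
  set m := Tm.wdepth u + 1 with hm
  set ρ : V → Tm A V := fun z => Tm.npre a ((f z + 1) * m) Tm.nil with hρdef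
  have hρ : Tm.ClosedSub ρ := fun z => Tm.npre_closed a _
  have all_a : ∀ l : List A, l = List.replicate l.length a := by
    intro l
    induction l with
    | nil => rfl
    | cons b l ih => rw [hA b]; simpa [List.replicate_succ] using ih
  -- bound on the length of w
  have hwlen : w.length ≤ Tm.wdepth u := by
    have hρ0 : Tm.ClosedSub (fun _ : V => (Tm.nil : Tm A V)) := fun z => rfl
    have h1 : w ∈ Tm.WT (Tm.subst (fun _ => Tm.nil) t) := ⟨_, Tm.wtrace_subst htr⟩
    rw [(h _ hρ0).2.1] at h1
    obtain ⟨r, hr⟩ := h1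
    exact le_trans (Tm.wtrace_wdepth hr) (Tm.wdepth_subst_nil u)
  have hmn : m ≤ (f x + 1) * m := Nat.le_mul_of_pos_left m (Nat.succ_pos _)
  -- the long trace of subst ρ t, ending at nil
  have htrace : Tm.WTraceTo (Tm.subst ρ t) (w ++ List.replicate ((f x + 1) * m) a) Tm.nil := by
    apply Tm.wtrace_append (Tm.wtrace_subst htr)
    obtain ⟨k, hk⟩ : ∃ k, (f x + 1) * m = k + 1 := ⟨(f x + 1) * m - 1, by omega⟩
    have hstep1 : Tm.Step (ρ x) (some a) (Tm.npre a k Tm.nil) := by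
      have hρx : ρ x = Tm.pre (some a) (Tm.npre a k Tm.nil) := by
        show Tm.npre a ((f x + 1) * m) Tm.nil = _
        rw [hk]
        rfl
      rw [hρx]
      exact Tm.Step.pre _ _
    rw [hk, List.replicate_succ]
    exact Tm.WTraceTo.act (Tm.step_init hx hstep1) (Tm.npre_trace a k)
  have hIF : Tm.WImpFut (Tm.subst ρ t) (w ++ List.replicate ((f x + 1) * m) a)
      {l : List A | l ≠ []} := by
    refine ⟨Tm.nil, htrace, fun s hs hsne => ?_⟩
    obtain ⟨r, hr⟩ := hs
    exact hsne (Tm.wtrace_nil hr).1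
  obtain ⟨u', htru, hu'⟩ := (h ρ hρ).1 _ _ hIF
  have hu'' : ∀ s ∈ Tm.WT u', s = [] := by
    intro s hs
    by_contra hne
    exact hu' s hs hne
  rcases Tm.wtrace_subst_inv htru u rfl with ⟨u₀, h1, _⟩ | ⟨w₁, w₂, u₀, y, heq, h1, h2, h3⟩
  · -- impossible: the trace is too long
    have hlen := Tm.wtrace_wdepth h1
    simp only [List.length_append, List.length_replicate] at hlen
    omega
  · -- the trace goes through a variable y
    obtain ⟨hlen2, hr⟩ := Tm.npre_inv h3 ((f y + 1) * m) rfl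
    -- the residue of ρ y must be nil, i.e. w₂ has full length
    have hw2 : w₂.length = (f y + 1) * m := by
      by_contra hne
      have hd : 1 ≤ (f y + 1) * m - w₂.length := by omega
      have : [a] ∈ Tm.WT u' := by
        refine ⟨Tm.npre a ((f y + 1) * m - w₂.length - 1) Tm.nil, ?_⟩
        rw [hr, show (f y + 1) * m - w₂.length = ((f y + 1) * m - w₂.length - 1) + 1 by omega]
        exact Tm.WTraceTo.act (Tm.Step.pre _ _) (Tm.WTraceTo.refl _)
      exact absurd (hu'' [a] this) (by simp)
    have hleneq : w.length + (f x + 1) * m = w₁.length + (f y + 1) * m := by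
      have := congrArg List.length heq
      simp only [List.length_append, List.length_replicate] at this
      omega
    have hw1len : w₁.length ≤ Tm.wdepth u := Tm.wtrace_wdepth h1
    have hfxy : f x = f y := by
      rcases Nat.lt_trichotomy (f x) (f y) with hlt | heq' | hgt
      · have hPQ : (f x + 1) * m + m ≤ (f y + 1) * m := by
          calc (f x + 1) * m + m = (f x + 2) * m := by ring
            _ ≤ (f y + 1) * m := Nat.mul_le_mul_right m (by omega)
        omega
      · exact heq'
      · have hPQ : (f y + 1) * m + m ≤ (f x + 1) * m := by
          calc (f y + 1) * m + m = (f y + 2) * m := by ring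
            _ ≤ (f x + 1) * m := Nat.mul_le_mul_right m (by omega)
        omega
    have hxy : x = y := hf hfxy
    have hwlens : w.length = w₁.length := by
      have : (f x + 1) * m = (f y + 1) * m := by rw [hfxy]
      omega
    have hww1 : w = w₁ := by
      rw [all_a w, all_a w₁, hwlens]
    exact ⟨u₀, by rw [hww1]; exact h1, by rw [hxy]; exact h2⟩
end
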